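/- arXiv:1402.2469 — 4 statements merged into one kernel-verified Lean document; each statement's English description precedes it below -/
import Mathlib

section
/- Let H be the complete s-uniform t-partite hypergraph with sides V_1, …, V_t. A subset A of V = V_1 ∪ ⋯ ∪ V_t is a minimal transversal of H if and only if A is the union of exactly t−s+1 distinct sides, i.e., A = V_{i_1} ∪ ⋯ ∪ V_{i_{t−s+1}} for some indices 1 ≤ i_1 < ⋯ < i_{t−s+1} ≤ t. -/
open Finset

/-- The vertex set `V = V_1 ∪ ⋯ ∪ V_t` of the multipartite hypergraph with sides `Vs`. -/
def vertexSet {α : Type*} [DecidableEq α] {t : ℕ} (Vs : Fin t → Finset α) : Finset α :=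
  Finset.univ.biUnion Vs

/-- `e` is an edge of the complete `s`-uniform `t`-partite hypergraph with sides `Vs`:
`e ⊆ V`, `|e| = s`, and `|e ∩ V_i| ≤ 1` for every side. -/
def IsEdge {α : Type*} [DecidableEq α] {t : ℕ} (Vs : Fin t → Finset α) (s : ℕ)
    (e : Finset α) : Prop :=
  e ⊆ vertexSet Vs ∧ e.card = s ∧ ∀ i : Fin t, (e ∩ Vs i).card ≤ 1

/-- `F` is an independent set: a subset of `V` containing no edge. -/
def Indep {α : Type*} [DecidableEq α] {t : ℕ} (Vs : Fin t → Finset α) (s : ℕ)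
    (F : Finset α) : Prop :=
  F ⊆ vertexSet Vs ∧ ∀ e : Finset α, IsEdge Vs s e → ¬ e ⊆ F

/-- `A` is a transversal: a subset of `V` meeting every edge. -/
def Transversal {α : Type*} [DecidableEq α] {t : ℕ} (Vs : Fin t → Finset α) (s : ℕ)
    (A : Finset α) : Prop :=
  A ⊆ vertexSet Vs ∧ ∀ e : Finset α, IsEdge Vs s e → (e ∩ A).Nonempty

open Classical in
/-- A subset of `V` is a transversal iff fewer than `s` sides are not contained in it. -/
theorem transversal_iff_card {α : Type*} [DecidableEq α] {t s : ℕ} (hs : 1 ≤ s) (hst : s ≤ t)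
    (Vs : Fin t → Finset α)
    (hdisj : ∀ i j : Fin t, i ≠ j → Disjoint (Vs i) (Vs j))
    (hne : ∀ i : Fin t, (Vs i).Nonempty)
    {A : Finset α} (hA : A ⊆ vertexSet Vs) :
    Transversal Vs s A ↔ (univ.filter (fun i => ¬ Vs i ⊆ A)).card < s := by
  have ht : 0 < t := lt_of_lt_of_le hs hst
  constructor
  · intro hT
    by_contra h
    push_neg at h
    obtain ⟨T, hTsub, hTcard⟩ := Finset.exists_subset_card_eq h
    -- pick a vertex outside A in each side indexed by T
    set g : Fin t → α := fun i =>
      if h : ∃ x ∈ Vs i, x ∉ A then h.choose else (hne i).choose with hg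
    have hgspec : ∀ i ∈ T, g i ∈ Vs i ∧ g i ∉ A := by
      intro i hi
      have hns : ¬ Vs i ⊆ A := (Finset.mem_filter.mp (hTsub hi)).2
      rw [Finset.not_subset] at hns
      obtain ⟨x, hx1, hx2⟩ := hns
      have hex : ∃ x ∈ Vs i, x ∉ A := ⟨x, hx1, hx2⟩
      simp only [hg, dif_pos hex]
      exact hex.choose_spec
    have hginj : Set.InjOn g T := by
      intro i hi j hj hij
      by_contra hne'
      exact Finset.disjoint_left.mp (hdisj i j hne') (hgspec i hi).1 (hij ▸ (hgspec j hj).1)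
    set e : Finset α := T.image g with he
    have hedge : IsEdge Vs s e := by
      refine ⟨?_, ?_, ?_⟩
      · intro x hx
        obtain ⟨i, hi, rfl⟩ := Finset.mem_image.mp hx
        exact Finset.mem_biUnion.mpr ⟨i, Finset.mem_univ i, (hgspec i hi).1⟩
      · rw [Finset.card_image_of_injOn hginj, hTcard]
      · intro i
        refine Finset.card_le_one.mpr ?_
        intro x hx y hy
        obtain ⟨hx1, hx2⟩ := Finset.mem_inter.mp hx
        obtain ⟨hy1, hy2⟩ := Finset.mem_inter.mp hy
        obtain ⟨a, ha, rfl⟩ := Finset.mem_image.mp hx1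
        obtain ⟨b, hb, rfl⟩ := Finset.mem_image.mp hy1
        have hai : a = i := by
          by_contra hne'
          exact Finset.disjoint_left.mp (hdisj a i hne') (hgspec a ha).1 hx2
        have hbi : b = i := by
          by_contra hne'
          exact Finset.disjoint_left.mp (hdisj b i hne') (hgspec b hb).1 hy2
        rw [hai, hbi]
    obtain ⟨x, hx⟩ := hT.2 e hedge
    obtain ⟨hx1, hx2⟩ := Finset.mem_inter.mp hx
    obtain ⟨i, hi, rfl⟩ := Finset.mem_image.mp hx1
    exact (hgspec i hi).2 hx2
  · intro h
    refine ⟨hA, ?_⟩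
    intro e hedge
    by_contra hempty
    rw [Finset.not_nonempty_iff_eq_empty] at hempty
    -- map each vertex of e to its side
    set f : α → Fin t := fun x =>
      if h : ∃ i, x ∈ Vs i then h.choose else ⟨0, ht⟩ with hf
    have hfspec : ∀ x ∈ e, x ∈ Vs (f x) := by
      intro x hx
      obtain ⟨i, _, hxi⟩ := Finset.mem_biUnion.mp (hedge.1 hx)
      have hex : ∃ i, x ∈ Vs i := ⟨i, hxi⟩
      simp only [hf, dif_pos hex]
      exact hex.choose_spec
    have hcard : e.card ≤ (univ.filter (fun i => ¬ Vs i ⊆ A)).card := by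
      apply Finset.card_le_card_of_injOn f
      · intro x hx
        refine Finset.mem_filter.mpr ⟨Finset.mem_univ _, ?_⟩
        rw [Finset.not_subset]
        refine ⟨x, hfspec x hx, ?_⟩
        intro hxA
        have : x ∈ e ∩ A := Finset.mem_inter.mpr ⟨hx, hxA⟩
        simp [hempty] at this
      · intro x hx y hy hxy
        have h2 : (e ∩ Vs (f x)).card ≤ 1 := hedge.2.2 (f x)
        have hxm : x ∈ e ∩ Vs (f x) := Finset.mem_inter.mpr ⟨hx, hfspec x hx⟩
        have hym : y ∈ e ∩ Vs (f x) := Finset.mem_inter.mpr ⟨hy, hxy ▸ hfspec y hy⟩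
        exact Finset.card_le_one.mp h2 x hxm y hym
    rw [hedge.2.1] at hcard
    omega

/-- A subset `A ⊆ V` is a minimal transversal of the complete
`s`-uniform `t`-partite hypergraph if and only if `A` is the union of exactly
`t - s + 1` distinct sides. -/
theorem minimal_transversal_iff_union_of_sides
    {α : Type*} [DecidableEq α] {t s : ℕ} (hs : 2 ≤ s) (hst : s ≤ t)
    (Vs : Fin t → Finset α)
    (hdisj : ∀ i j : Fin t, i ≠ j → Disjoint (Vs i) (Vs j))
    (hne : ∀ i : Fin t, (Vs i).Nonempty)
    (A : Finset α) :
    (Transversal Vs s A ∧ ∀ B : Finset α, B ⊂ A → ¬ Transversal Vs s B) ↔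
      ∃ S : Finset (Fin t), S.card = t - s + 1 ∧ A = S.biUnion Vs := by
  have hs1 : 1 ≤ s := by omega
  have key := fun (B : Finset α) (hB : B ⊆ vertexSet Vs) =>
    transversal_iff_card hs1 hst Vs hdisj hne hB
  constructor
  · rintro ⟨hT, hmin⟩
    have hA : A ⊆ vertexSet Vs := hT.1
    have hcard : (univ.filter (fun i => ¬ Vs i ⊆ A)).card < s := (key A hA).mp hT
    have hsplit := Finset.card_filter_add_card_filter_not
      (s := (univ : Finset (Fin t))) (p := fun i => Vs i ⊆ A)
    rw [Finset.card_univ, Fintype.card_fin] at hsplit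
    have hpos : t - s + 1 ≤ (univ.filter (fun i => Vs i ⊆ A)).card := by omega
    obtain ⟨S, hSsub, hScard⟩ := Finset.exists_subset_card_eq hpos
    have hBsubA : S.biUnion Vs ⊆ A := by
      intro x hx
      obtain ⟨i, hi, hxi⟩ := Finset.mem_biUnion.mp hx
      exact (Finset.mem_filter.mp (hSsub hi)).2 hxi
    have hBV : S.biUnion Vs ⊆ vertexSet Vs := hBsubA.trans hA
    have hBT : Transversal Vs s (S.biUnion Vs) := by
      rw [key _ hBV]
      have hsub : univ.filter (fun i => ¬ Vs i ⊆ S.biUnion Vs) ⊆ univ \ S := by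
        intro i hi
        have hni := (Finset.mem_filter.mp hi).2
        refine Finset.mem_sdiff.mpr ⟨Finset.mem_univ _, fun hiS => hni ?_⟩
        intro x hx
        exact Finset.mem_biUnion.mpr ⟨i, hiS, hx⟩
      have := Finset.card_le_card hsub
      rw [Finset.card_sdiff_of_subset (Finset.subset_univ S), Finset.card_univ,
        Fintype.card_fin, hScard] at this
      omega
    have : ¬ S.biUnion Vs ⊂ A := fun h => hmin _ h hBT
    have hEq : S.biUnion Vs = A := by
      rcases eq_or_ne (S.biUnion Vs) A with h | h
      · exact h
      · exact absurd (Finset.ssubset_iff_subset_ne.mpr ⟨hBsubA, h⟩) this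
    exact ⟨S, hScard, hEq.symm⟩
  · rintro ⟨S, hScard, rfl⟩
    have hSt : S.card ≤ t := le_trans (Finset.card_le_card (Finset.subset_univ S))
      (by rw [Finset.card_univ, Fintype.card_fin])
    have hV : S.biUnion Vs ⊆ vertexSet Vs := by
      intro x hx
      obtain ⟨i, _, hxi⟩ := Finset.mem_biUnion.mp hx
      exact Finset.mem_biUnion.mpr ⟨i, Finset.mem_univ _, hxi⟩
    have hout : ∀ i : Fin t, i ∉ S → Disjoint (Vs i) (S.biUnion Vs) := by
      intro i hi
      rw [Finset.disjoint_biUnion_right]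
      exact fun j hj => hdisj i j (fun h => hi (h ▸ hj))
    constructor
    · rw [key _ hV]
      have hsub : univ.filter (fun i => ¬ Vs i ⊆ S.biUnion Vs) ⊆ univ \ S := by
        intro i hi
        have hni := (Finset.mem_filter.mp hi).2
        refine Finset.mem_sdiff.mpr ⟨Finset.mem_univ _, fun hiS => hni ?_⟩
        intro x hx
        exact Finset.mem_biUnion.mpr ⟨i, hiS, hx⟩
      have := Finset.card_le_card hsub
      rw [Finset.card_sdiff_of_subset (Finset.subset_univ S), Finset.card_univ,
        Fintype.card_fin, hScard] at this
      omega
    · intro B hB hBT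
      have hBsub : B ⊆ S.biUnion Vs := hB.subset
      have hBV : B ⊆ vertexSet Vs := hBsub.trans hV
      have hBcard : (univ.filter (fun i => ¬ Vs i ⊆ B)).card < s := (key B hBV).mp hBT
      -- there is a vertex of the union missing from B, living in some side j ∈ S
      obtain ⟨x, hxA, hxB⟩ := Finset.exists_of_ssubset hB
      obtain ⟨j, hjS, hxj⟩ := Finset.mem_biUnion.mp hxA
      -- all sides outside S, plus side j, are not contained in B
      have hsub : insert j (univ \ S) ⊆ univ.filter (fun i => ¬ Vs i ⊆ B) := by
        intro i hi
        refine Finset.mem_filter.mpr ⟨Finset.mem_univ _, ?_⟩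
        rw [Finset.not_subset]
        rcases Finset.mem_insert.mp hi with rfl | hi
        · exact ⟨x, hxj, hxB⟩
        · have hiS := (Finset.mem_sdiff.mp hi).2
          obtain ⟨y, hy⟩ := hne i
          refine ⟨y, hy, fun hyB => ?_⟩
          exact Finset.disjoint_left.mp (hout i hiS) hy (hBsub hyB)
      have hjnot : j ∉ univ \ S := fun h => (Finset.mem_sdiff.mp h).2 hjS
      have := Finset.card_le_card hsub
      rw [Finset.card_insert_of_notMem hjnot, Finset.card_sdiff_of_subset (Finset.subset_univ S),
        Finset.card_univ, Fintype.card_fin, hScard] at this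
      omega
end

section
/- Let H be the complete s-uniform t-partite hypergraph with sides V_1, …, V_t. The independence complex Ind(H) is a tight complex if and only if |V_i| = 1 for every i = 1, …, t, i.e., H is the complete s-uniform hypergraph on t vertices. -/
open Finset

/-- `F` is a facet of the independence complex, i.e. a maximal independent set. -/
def IsFacetInd {α : Type*} [DecidableEq α] {t : ℕ} (Vs : Fin t → Finset α) (s : ℕ)
    (F : Finset α) : Prop :=
  Indep Vs s F ∧ ∀ G : Finset α, Indep Vs s G → F ⊆ G → F = G

section Aux

variable {α : Type*} [DecidableEq α] {t s : ℕ} {Vs : Fin t → Finset α}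

lemma mem_vertexSet' {a : α} : a ∈ vertexSet Vs ↔ ∃ i, a ∈ Vs i := by
  simp [vertexSet]

lemma side_unique (hdisj : ∀ i j : Fin t, i ≠ j → Disjoint (Vs i) (Vs j))
    {a : α} {i j : Fin t} (hi : a ∈ Vs i) (hj : a ∈ Vs j) : i = j := by
  by_contra h
  exact Finset.disjoint_left.mp (hdisj i j h) hi hj

/-- Constructing an edge by picking one vertex from each side in `T`. -/
lemma edge_of_pick (hdisj : ∀ i j : Fin t, i ≠ j → Disjoint (Vs i) (Vs j))
    {T : Finset (Fin t)} (hT : T.card = s)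
    {pick : Fin t → α} (hpick : ∀ b ∈ T, pick b ∈ Vs b) :
    IsEdge Vs s (T.image pick) := by
  refine ⟨?_, ?_, ?_⟩
  · intro x hx
    obtain ⟨b, hb, rfl⟩ := Finset.mem_image.mp hx
    exact mem_vertexSet'.mpr ⟨b, hpick b hb⟩
  · rw [Finset.card_image_of_injOn, hT]
    intro b hb b' hb' h
    exact side_unique hdisj (h ▸ hpick b hb) (hpick b' hb')
  · intro i
    refine Finset.card_le_one.mpr ?_
    intro x hx y hy
    obtain ⟨hx1, hx2⟩ := Finset.mem_inter.mp hx
    obtain ⟨hy1, hy2⟩ := Finset.mem_inter.mp hy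
    obtain ⟨b, hb, rfl⟩ := Finset.mem_image.mp hx1
    obtain ⟨b', hb', rfl⟩ := Finset.mem_image.mp hy1
    have h1 : b = i := side_unique hdisj (hpick b hb) hx2
    have h2 : b' = i := side_unique hdisj (hpick b' hb') hy2
    rw [h1, h2]

/-- Any union of `s-1` full sides is a facet. -/
lemma facet_biUnion (hs : 2 ≤ s)
    (hdisj : ∀ i j : Fin t, i ≠ j → Disjoint (Vs i) (Vs j))
    (hne : ∀ i : Fin t, (Vs i).Nonempty)
    {S : Finset (Fin t)} (hS : S.card = s - 1) :
    IsFacetInd Vs s (S.biUnion Vs) := by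
  constructor
  · constructor
    · intro x hx
      obtain ⟨b, _, hb⟩ := Finset.mem_biUnion.mp hx
      exact mem_vertexSet'.mpr ⟨b, hb⟩
    · rintro e ⟨heV, hecard, hside⟩ heF
      have hsub : e ⊆ S.biUnion (fun b => e ∩ Vs b) := by
        intro x hx
        obtain ⟨b, hb, hxb⟩ := Finset.mem_biUnion.mp (heF hx)
        exact Finset.mem_biUnion.mpr ⟨b, hb, Finset.mem_inter.mpr ⟨hx, hxb⟩⟩
      have h1 : e.card ≤ ∑ b ∈ S, (e ∩ Vs b).card :=
        le_trans (Finset.card_le_card hsub) (Finset.card_biUnion_le)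
      have h2 : ∑ b ∈ S, (e ∩ Vs b).card ≤ ∑ _b ∈ S, 1 :=
        Finset.sum_le_sum fun b _ => hside b
      simp only [Finset.sum_const, smul_eq_mul, mul_one] at h2
      omega
  · intro G hG hFG
    refine Finset.Subset.antisymm hFG ?_
    intro x hxG
    by_contra hxF
    obtain ⟨c, hc⟩ := mem_vertexSet'.mp (hG.1 hxG)
    have hcS : c ∉ S := by
      intro hcS
      exact hxF (Finset.mem_biUnion.mpr ⟨c, hcS, hc⟩)
    set pick : Fin t → α := fun b => if b = c then x else (hne b).choose with hpickdef
    have hpick : ∀ b ∈ insert c S, pick b ∈ Vs b := by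
      intro b _
      by_cases hbc : b = c
      · subst hbc; simp [hpickdef, hc]
      · simp [hpickdef, hbc, (hne b).choose_spec]
    have hT : (insert c S).card = s := by
      rw [Finset.card_insert_of_notMem hcS, hS]; omega
    refine hG.2 _ (edge_of_pick hdisj hT hpick) ?_
    intro y hy
    obtain ⟨b, hb, rfl⟩ := Finset.mem_image.mp hy
    by_cases hbc : b = c
    · subst hbc; simpa [hpickdef] using hxG
    · have hbS : b ∈ S := by
        rcases Finset.mem_insert.mp hb with h | h
        · exact absurd h hbc
        · exact h
      have : pick b ∈ Vs b := by simp [hpickdef, hbc, (hne b).choose_spec]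
      exact hFG (Finset.mem_biUnion.mpr ⟨b, hbS, this⟩)

/-- If a side `c ∈ S` has at least two vertices, then removing one vertex of `V_c`
from the union of the sides in `S` and adding a vertex outside gives a dependent set. -/
lemma not_indep_exchange (hs : 2 ≤ s)
    (hdisj : ∀ i j : Fin t, i ≠ j → Disjoint (Vs i) (Vs j))
    (hne : ∀ i : Fin t, (Vs i).Nonempty)
    {S : Finset (Fin t)} (hS : S.card = s - 1)
    {c : Fin t} (hc : c ∈ S) {j₀ j₁ j' : α}
    (hj₀ : j₀ ∈ Vs c) (hj₁ : j₁ ∈ Vs c) (hne01 : j₁ ≠ j₀)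
    (hj' : j' ∈ vertexSet Vs) (hj'G : j' ∉ S.biUnion Vs) :
    ¬ Indep Vs s (insert j' ((S.biUnion Vs).erase j₀)) := by
  obtain ⟨m, hm⟩ := mem_vertexSet'.mp hj'
  have hmS : m ∉ S := fun h => hj'G (Finset.mem_biUnion.mpr ⟨m, h, hm⟩)
  have hmc : m ≠ c := fun h => hmS (h ▸ hc)
  set pick : Fin t → α := fun b => if b = c then j₁ else if b = m then j' else (hne b).choose
    with hpickdef
  have hpick : ∀ b ∈ insert m S, pick b ∈ Vs b := by
    intro b _
    by_cases hbc : b = c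
    · subst hbc; simpa [hpickdef] using hj₁
    · by_cases hbm : b = m
      · subst hbm; simpa [hpickdef, hbc] using hm
      · simp [hpickdef, hbc, hbm, (hne b).choose_spec]
  have hT : (insert m S).card = s := by
    rw [Finset.card_insert_of_notMem hmS, hS]; omega
  intro hInd
  refine hInd.2 _ (edge_of_pick hdisj hT hpick) ?_
  intro y hy
  obtain ⟨b, hb, rfl⟩ := Finset.mem_image.mp hy
  by_cases hbm : b = m
  · subst hbm
    simp [hpickdef, hmc]
  · have hbS : b ∈ S := by
      rcases Finset.mem_insert.mp hb with h | h
      · exact absurd h hbm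
      · exact h
    by_cases hbc : b = c
    · subst hbc
      refine Finset.mem_insert_of_mem (Finset.mem_erase.mpr ⟨by simpa [hpickdef] using hne01, ?_⟩)
      simp only [hpickdef, if_pos rfl]
      exact Finset.mem_biUnion.mpr ⟨b, hbS, hj₁⟩
    · have hpb : pick b ∈ Vs b := by simp [hpickdef, hbc, hbm, (hne b).choose_spec]
      refine Finset.mem_insert_of_mem (Finset.mem_erase.mpr ⟨?_, ?_⟩)
      · intro h
        exact hbc (side_unique hdisj (h ▸ hpb) hj₀)
      · exact Finset.mem_biUnion.mpr ⟨b, hbS, hpb⟩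

end Aux

/-- The independence complex `Ind(H)` of the complete `s`-uniform
`t`-partite hypergraph is a tight complex (it is pure, and there is an injective
labelling of the vertices of `V` such that for all facets `G₁, G₂` and vertices
`i ∈ G₁ \ G₂`, `j ∈ G₂ \ G₁` with label of `i` less than label of `j`, there is
`j' ∈ G₁ \ G₂` with `(G₂ \ {j}) ∪ {j'}` a facet) if and only if every side is a
singleton. -/
theorem tight_complex_iff_all_sides_singleton
    {α : Type*} [DecidableEq α] {t s : ℕ} (hs : 2 ≤ s) (hst : s ≤ t)
    (Vs : Fin t → Finset α)
    (hdisj : ∀ i j : Fin t, i ≠ j → Disjoint (Vs i) (Vs j))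
    (hne : ∀ i : Fin t, (Vs i).Nonempty) :
    ((∀ F G : Finset α, IsFacetInd Vs s F → IsFacetInd Vs s G → F.card = G.card) ∧
      ∃ ℓ : α → ℕ, Set.InjOn ℓ (vertexSet Vs : Set α) ∧
        ∀ G₁ G₂ : Finset α, IsFacetInd Vs s G₁ → IsFacetInd Vs s G₂ →
          ∀ i ∈ G₁ \ G₂, ∀ j ∈ G₂ \ G₁, ℓ i < ℓ j →
            ∃ j' ∈ G₁ \ G₂, IsFacetInd Vs s (insert j' (G₂.erase j))) ↔
      ∀ i : Fin t, (Vs i).card = 1 := by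
  constructor
  · rintro ⟨hpure, ℓ, hℓinj, hex⟩
    -- Step 1: purity implies all sides have the same cardinality.
    have hcard_eq : ∀ a b : Fin t, (Vs a).card = (Vs b).card := by
      intro a b
      by_cases hab : a = b
      · rw [hab]
      · obtain ⟨S, haS, hSsub, hScard⟩ :=
          Finset.exists_subsuperset_card_eq
            (s := ({a} : Finset (Fin t))) (t := Finset.univ.erase b) (n := s - 1)
            (by simp [Finset.subset_erase]; exact fun h => hab h.symm)
            (by simp; omega)
            (by simp [Finset.card_erase_of_mem]; omega)
        have haS' : a ∈ S := haS (Finset.mem_singleton_self a)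
        have hbS : b ∉ S := fun h => by simpa using (hSsub h)
        set S' : Finset (Fin t) := insert b (S.erase a) with hS'def
        have hbS' : b ∉ S.erase a := fun h => hbS (Finset.mem_of_mem_erase h)
        have hS'card : S'.card = s - 1 := by
          rw [hS'def, Finset.card_insert_of_notMem hbS', Finset.card_erase_of_mem haS',
            hScard]
          omega
        have hF1 := facet_biUnion hs hdisj hne hScard
        have hF2 := facet_biUnion hs hdisj hne hS'card
        have hkey := hpure _ _ hF1 hF2
        have hdS : ∀ (T : Finset (Fin t)), (T.biUnion Vs).card = ∑ i ∈ T, (Vs i).card := by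
          intro T
          exact Finset.card_biUnion (fun x _ y _ hxy => hdisj x y hxy)
        rw [hdS, hdS] at hkey
        have h1 : ∑ i ∈ S, (Vs i).card = (Vs a).card + ∑ i ∈ S.erase a, (Vs i).card :=
          (Finset.add_sum_erase S _ haS').symm
        have h2 : ∑ i ∈ S', (Vs i).card = (Vs b).card + ∑ i ∈ S.erase a, (Vs i).card := by
          rw [hS'def, Finset.sum_insert hbS']
        omega
    -- Step 2: suppose some side (hence all sides) has at least two vertices.
    intro a
    by_contra hcona
    have h2a : 2 ≤ (Vs a).card := by
      have := (hne a).card_pos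
      omega
    have h2all : ∀ i, 2 ≤ (Vs i).card := fun i => (hcard_eq a i) ▸ h2a
    -- Build two distinct facets.
    obtain ⟨S₁, hS₁sub, hS₁card⟩ :=
      Finset.exists_subset_card_eq (s := (Finset.univ : Finset (Fin t))) (n := s - 1)
        (by simp; omega)
    obtain ⟨c, hcS₁⟩ : ∃ c : Fin t, c ∉ S₁ := by
      by_contra h
      push_neg at h
      have : (Finset.univ : Finset (Fin t)) ⊆ S₁ := fun x _ => h x
      have := Finset.card_le_card this
      simp [hS₁card] at this
      omega
    obtain ⟨d, hdS₁⟩ : ∃ d, d ∈ S₁ := by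
      have : 0 < S₁.card := by omega
      exact (Finset.card_pos.mp this)
    have hdc : d ≠ c := fun h => hcS₁ (h ▸ hdS₁)
    set S₂ : Finset (Fin t) := insert c (S₁.erase d) with hS₂def
    have hcS₂ : c ∈ S₂ := Finset.mem_insert_self c _
    have hdS₂ : d ∉ S₂ := by
      rw [hS₂def]
      simp [hdc]
    have hS₂card : S₂.card = s - 1 := by
      rw [hS₂def, Finset.card_insert_of_notMem (fun h => hcS₁ (Finset.mem_of_mem_erase h)),
        Finset.card_erase_of_mem hdS₁, hS₁card]
      omega
    set G₁ := S₁.biUnion Vs with hG₁def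
    set G₂ := S₂.biUnion Vs with hG₂def
    have hF₁ := facet_biUnion hs hdisj hne hS₁card
    have hF₂ := facet_biUnion hs hdisj hne hS₂card
    have hVd : ∀ x ∈ Vs d, x ∈ G₁ \ G₂ := by
      intro x hx
      refine Finset.mem_sdiff.mpr ⟨Finset.mem_biUnion.mpr ⟨d, hdS₁, hx⟩, ?_⟩
      intro hxG₂
      obtain ⟨b, hb, hxb⟩ := Finset.mem_biUnion.mp hxG₂
      exact hdS₂ ((side_unique hdisj hxb hx) ▸ hb)
    have hVc : ∀ x ∈ Vs c, x ∈ G₂ \ G₁ := by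
      intro x hx
      refine Finset.mem_sdiff.mpr ⟨Finset.mem_biUnion.mpr ⟨c, hcS₂, hx⟩, ?_⟩
      intro hxG₁
      obtain ⟨b, hb, hxb⟩ := Finset.mem_biUnion.mp hxG₁
      exact hcS₁ ((side_unique hdisj hxb hx) ▸ hb)
    obtain ⟨i₀, hi₀, i₁, hi₁, hi01⟩ := Finset.one_lt_card.mp (h2all d)
    obtain ⟨j₀, hj₀, j₁, hj₁, hj01⟩ := Finset.one_lt_card.mp (h2all c)
    have hi₀V : i₀ ∈ vertexSet Vs := mem_vertexSet'.mpr ⟨d, hi₀⟩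
    have hj₀V : j₀ ∈ vertexSet Vs := mem_vertexSet'.mpr ⟨c, hj₀⟩
    have hij : i₀ ≠ j₀ := fun h => Finset.disjoint_left.mp (hdisj d c hdc) hi₀ (h ▸ hj₀)
    have hℓij : ℓ i₀ ≠ ℓ j₀ := fun h => hij (hℓinj (by simpa using hi₀V) (by simpa using hj₀V) h)
    rcases Nat.lt_or_ge (ℓ i₀) (ℓ j₀) with hlt | hge
    · obtain ⟨j', hj'mem, hj'facet⟩ :=
        hex G₁ G₂ hF₁ hF₂ i₀ (hVd i₀ hi₀) j₀ (hVc j₀ hj₀) hlt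
      obtain ⟨hj'G₁, hj'nG₂⟩ := Finset.mem_sdiff.mp hj'mem
      exact not_indep_exchange hs hdisj hne hS₂card hcS₂ hj₀ hj₁
        (Ne.symm hj01) (hF₁.1.1 hj'G₁) hj'nG₂ hj'facet.1
    · have hlt : ℓ j₀ < ℓ i₀ := by omega
      obtain ⟨j', hj'mem, hj'facet⟩ :=
        hex G₂ G₁ hF₂ hF₁ j₀ (hVc j₀ hj₀) i₀ (hVd i₀ hi₀) hlt
      obtain ⟨hj'G₂, hj'nG₁⟩ := Finset.mem_sdiff.mp hj'mem
      exact not_indep_exchange hs hdisj hne hS₁card hdS₁ hi₀ hi₁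
        (Ne.symm hi01) (hF₂.1.1 hj'G₂) hj'nG₁ hj'facet.1
  · -- Easy direction: all sides singletons.
    intro hcard
    have hVcard : (vertexSet Vs).card = t := by
      rw [vertexSet, Finset.card_biUnion (fun x _ y _ hxy => hdisj x y hxy)]
      simp [hcard]
    -- independence is just cardinality < s
    have hindep : ∀ F : Finset α, Indep Vs s F ↔ F ⊆ vertexSet Vs ∧ F.card < s := by
      intro F
      constructor
      · rintro ⟨hFV, hFe⟩
        refine ⟨hFV, ?_⟩
        by_contra h
        push_neg at h
        obtain ⟨e, heF, hecard⟩ := Finset.exists_subset_card_eq h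
        refine hFe e ⟨heF.trans hFV, hecard, fun i => ?_⟩ heF
        calc (e ∩ Vs i).card ≤ (Vs i).card := Finset.card_le_card (Finset.inter_subset_right)
          _ = 1 := hcard i
      · rintro ⟨hFV, hFcard⟩
        refine ⟨hFV, fun e he hef => ?_⟩
        obtain ⟨-, hecard, -⟩ := he
        have := Finset.card_le_card hef
        omega
    have hfacet : ∀ F : Finset α, IsFacetInd Vs s F ↔ F ⊆ vertexSet Vs ∧ F.card = s - 1 := by
      intro F
      constructor
      · rintro ⟨hFind, hFmax⟩
        obtain ⟨hFV, hFcard⟩ := (hindep F).mp hFind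
        refine ⟨hFV, ?_⟩
        obtain ⟨G, hFG, hGV, hGcard⟩ :=
          Finset.exists_subsuperset_card_eq (n := s - 1) hFV (by omega) (by omega)
        have hGind : Indep Vs s G := (hindep G).mpr ⟨hGV, by omega⟩
        rw [hFmax G hGind hFG, hGcard]
      · rintro ⟨hFV, hFcard⟩
        refine ⟨(hindep F).mpr ⟨hFV, by omega⟩, fun G hG hFG => ?_⟩
        obtain ⟨_, hGcard⟩ := (hindep G).mp hG
        exact Finset.eq_of_subset_of_card_le hFG (by omega)
    constructor
    · intro F G hF hG
      rw [((hfacet F).mp hF).2, ((hfacet G).mp hG).2]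
    · refine ⟨fun a => (vertexSet Vs).toList.idxOf a, ?_, ?_⟩
      · intro x hx y hy hxy
        exact (List.idxOf_inj (Finset.mem_toList.mpr hx)).mp hxy
      · intro G₁ G₂ hG₁ hG₂ i hi j hj _
        refine ⟨i, hi, ?_⟩
        obtain ⟨hG₁V, hG₁card⟩ := (hfacet G₁).mp hG₁
        obtain ⟨hG₂V, hG₂card⟩ := (hfacet G₂).mp hG₂
        obtain ⟨hiG₁, hinG₂⟩ := Finset.mem_sdiff.mp hi
        obtain ⟨hjG₂, hjnG₁⟩ := Finset.mem_sdiff.mp hj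
        refine (hfacet _).mpr ⟨?_, ?_⟩
        · intro x hx
          rcases Finset.mem_insert.mp hx with h | h
          · exact h ▸ hG₁V hiG₁
          · exact hG₂V (Finset.mem_of_mem_erase h)
        · rw [Finset.card_insert_of_notMem (fun h => hinG₂ (Finset.mem_of_mem_erase h)),
            Finset.card_erase_of_mem hjG₂, hG₂card]
          omega
end

section
/- Let H be the complete s-uniform t-partite hypergraph with sides V_1, …, V_t. The independence complex Ind(H) is vertex decomposable if and only if at least t−1 of the sides V_1, …, V_t consist of exactly one vertex. -/
open Finset

/-- Deletion of a vertex from a simplicial complex (given as its set of faces). -/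
def complexDel {α : Type*} (Δ : Set (Finset α)) (v : α) : Set (Finset α) :=
  {F ∈ Δ | v ∉ F}

/-- Link of a vertex in a simplicial complex (given as its set of faces). -/
def complexLink {α : Type*} [DecidableEq α] (Δ : Set (Finset α)) (v : α) :
    Set (Finset α) :=
  {F | v ∉ F ∧ insert v F ∈ Δ}

/-- `F` is a facet (maximal face) of the complex `Δ`. -/
def IsFacetOf {α : Type*} (Δ : Set (Finset α)) (F : Finset α) : Prop :=
  F ∈ Δ ∧ ∀ G ∈ Δ, F ⊆ G → F = G

/-- Vertex decomposability of a simplicial complex (given as its set of faces):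
`Δ` is a simplex (including the void complex `{}` and `{∅}`), or it has a shedding
vertex `v` such that the deletion and the link at `v` are vertex decomposable and no
face of the link is a facet of the deletion. -/
inductive VertexDecomposable {α : Type*} [DecidableEq α] : Set (Finset α) → Prop
  | void : VertexDecomposable (∅ : Set (Finset α))
  | simplex (F : Finset α) : VertexDecomposable {G : Finset α | G ⊆ F}
  | shed (Δ : Set (Finset α)) (v : α)
      (hdel : VertexDecomposable (complexDel Δ v))
      (hlink : VertexDecomposable (complexLink Δ v))
      (hshed : ∀ F ∈ complexLink Δ v, ¬ IsFacetOf (complexDel Δ v) F) :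
      VertexDecomposable Δ


/-! ### Auxiliary development -/

namespace VDaux

variable {α : Type*} [DecidableEq α]

lemma inter_erase_eq {F S : Finset α} {a : α} (hv : a ∉ F) :
    F ∩ S.erase a = F ∩ S := by
  ext x
  simp only [Finset.mem_inter, Finset.mem_erase]
  exact ⟨fun ⟨h1, _, h3⟩ => ⟨h1, h3⟩, fun ⟨h1, h3⟩ => ⟨h1, fun e => hv (e ▸ h1), h3⟩⟩

/-- The model complex for the "at most one non-singleton side" situation:
`S` is the set of singleton-side vertices, `B0` the big side, `k` the bound. -/
def deltaForm (k : ℕ) (S B0 : Finset α) : Set (Finset α) :=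
  {F | F ⊆ S ∪ B0 ∧ (F ∩ S).card + (if F ∩ B0 = ∅ then 0 else 1) ≤ k}

lemma deltaForm_del (k : ℕ) (S B0 : Finset α) (hd : Disjoint S B0) {a : α} (ha : a ∈ S) :
    complexDel (deltaForm k S B0) a = deltaForm k (S.erase a) B0 := by
  have haB : a ∉ B0 := Finset.disjoint_left.mp hd ha
  ext F
  simp only [complexDel, deltaForm, Set.mem_setOf_eq, Set.mem_sep_iff]
  constructor
  · rintro ⟨⟨h1, h2⟩, hv⟩
    refine ⟨?_, ?_⟩
    · intro x hx
      rcases Finset.mem_union.mp (h1 hx) with h | h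
      · exact Finset.mem_union_left _ (Finset.mem_erase.mpr ⟨fun e => hv (e ▸ hx), h⟩)
      · exact Finset.mem_union_right _ h
    · rwa [inter_erase_eq hv]
  · rintro ⟨h1, h2⟩
    have hv : a ∉ F := by
      intro hx
      rcases Finset.mem_union.mp (h1 hx) with h | h
      · exact (Finset.mem_erase.mp h).1 rfl
      · exact haB h
    refine ⟨⟨?_, ?_⟩, hv⟩
    · intro x hx
      rcases Finset.mem_union.mp (h1 hx) with h | h
      · exact Finset.mem_union_left _ (Finset.mem_erase.mp h).2
      · exact Finset.mem_union_right _ h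
    · rwa [← inter_erase_eq (S := S) hv]

lemma deltaForm_link (k : ℕ) (S B0 : Finset α) (hd : Disjoint S B0) {a : α} (ha : a ∈ S)
    (hk : 1 ≤ k) :
    complexLink (deltaForm k S B0) a = deltaForm (k - 1) (S.erase a) B0 := by
  have haB : a ∉ B0 := Finset.disjoint_left.mp hd ha
  ext F
  simp only [complexLink, deltaForm, Set.mem_setOf_eq]
  constructor
  · rintro ⟨hv, h1, h2⟩
    have hiS : (insert a F) ∩ S = insert a (F ∩ S) := Finset.insert_inter_of_mem ha
    have hiB : (insert a F) ∩ B0 = F ∩ B0 := Finset.insert_inter_of_notMem haB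
    rw [hiS, hiB] at h2
    have hcard : (insert a (F ∩ S)).card = (F ∩ S).card + 1 :=
      Finset.card_insert_of_notMem (fun h => hv (Finset.mem_inter.mp h).1)
    rw [hcard] at h2
    refine ⟨?_, ?_⟩
    · intro x hx
      have hx' : x ∈ S ∪ B0 := h1 (Finset.mem_insert_of_mem hx)
      rcases Finset.mem_union.mp hx' with h | h
      · exact Finset.mem_union_left _ (Finset.mem_erase.mpr ⟨fun e => hv (e ▸ hx), h⟩)
      · exact Finset.mem_union_right _ h
    · rw [inter_erase_eq hv]; omega
  · rintro ⟨h1, h2⟩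
    have hv : a ∉ F := by
      intro hx
      rcases Finset.mem_union.mp (h1 hx) with h | h
      · exact (Finset.mem_erase.mp h).1 rfl
      · exact haB h
    rw [inter_erase_eq hv] at h2
    refine ⟨hv, ?_, ?_⟩
    · rw [Finset.insert_subset_iff]
      refine ⟨Finset.mem_union_left _ ha, fun x hx => ?_⟩
      rcases Finset.mem_union.mp (h1 hx) with h | h
      · exact Finset.mem_union_left _ (Finset.mem_erase.mp h).2
      · exact Finset.mem_union_right _ h
    · rw [Finset.insert_inter_of_mem ha, Finset.insert_inter_of_notMem haB,
        Finset.card_insert_of_notMem (fun h => hv (Finset.mem_inter.mp h).1)]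
      omega

lemma vd_deltaForm (B0 : Finset α) (hB0 : B0.Nonempty) :
    ∀ S : Finset α, Disjoint S B0 → ∀ k : ℕ, VertexDecomposable (deltaForm k S B0) := by
  intro S
  induction S using Finset.strongInduction with
  | _ S IH =>
    intro hd k
    by_cases hk0 : k = 0
    · subst hk0
      have : deltaForm 0 S B0 = {G : Finset α | G ⊆ (∅ : Finset α)} := by
        ext F
        simp only [deltaForm, Set.mem_setOf_eq, Finset.subset_empty]
        constructor
        · rintro ⟨h1, h2⟩
          have hB : F ∩ B0 = ∅ := by
            by_contra h; rw [if_neg h] at h2; omega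
          have hS : F ∩ S = ∅ := Finset.card_eq_zero.mp
            (Nat.le_zero.mp (le_trans (Nat.le_add_right _ _) h2))
          apply Finset.subset_empty.mp
          intro x hx
          rcases Finset.mem_union.mp (h1 hx) with h | h
          · exact absurd (Finset.mem_inter.mpr ⟨hx, h⟩) (by simp [hS])
          · exact absurd (Finset.mem_inter.mpr ⟨hx, h⟩) (by simp [hB])
        · rintro rfl
          simp
      rw [this]
      exact VertexDecomposable.simplex ∅
    by_cases hkS : S.card < k
    · have : deltaForm k S B0 = {G : Finset α | G ⊆ S ∪ B0} := by
        ext F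
        simp only [deltaForm, Set.mem_setOf_eq]
        refine ⟨fun h => h.1, fun h => ⟨h, ?_⟩⟩
        have hc : (F ∩ S).card ≤ S.card := Finset.card_le_card (Finset.inter_subset_right)
        split_ifs <;> omega
      rw [this]
      exact VertexDecomposable.simplex (S ∪ B0)
    · -- 1 ≤ k ≤ S.card
      have hk1 : 1 ≤ k := by omega
      have hkS' : k ≤ S.card := by omega
      have hSne : S.Nonempty := Finset.card_pos.mp (by omega)
      obtain ⟨a, ha⟩ := hSne
      have hd' : Disjoint (S.erase a) B0 := Finset.disjoint_of_subset_left (Finset.erase_subset _ _) hd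
      have hcard' : (S.erase a).card = S.card - 1 := Finset.card_erase_of_mem ha
      refine VertexDecomposable.shed _ a ?_ ?_ ?_
      · rw [deltaForm_del k S B0 hd ha]
        exact IH (S.erase a) (Finset.erase_ssubset ha) hd' k
      · rw [deltaForm_link k S B0 hd ha hk1]
        exact IH (S.erase a) (Finset.erase_ssubset ha) hd' (k - 1)
      · rw [deltaForm_del k S B0 hd ha, deltaForm_link k S B0 hd ha hk1]
        rintro F ⟨hF1, hF2⟩ ⟨-, hmax⟩
        by_cases hBF : B0 ⊆ F
        · -- extend by a fresh vertex of S.erase a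
          have hFB : F ∩ B0 = B0 := Finset.inter_eq_right.mpr hBF
          have hFBne : ¬ (F ∩ B0 = ∅) := by
            rw [hFB]; exact Finset.nonempty_iff_ne_empty.mp hB0
          rw [if_neg hFBne] at hF2
          have hsmall : (F ∩ S.erase a).card < (S.erase a).card := by omega
          have : ¬ (S.erase a ⊆ F) := by
            intro hsub
            have : F ∩ S.erase a = S.erase a := Finset.inter_eq_right.mpr hsub
            rw [this] at hsmall; omega
          obtain ⟨b, hbS, hbF⟩ := Finset.not_subset.mp this
          have hbB : b ∉ B0 := Finset.disjoint_left.mp hd' hbS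
          have hGmem : insert b F ∈ deltaForm k (S.erase a) B0 := by
            refine ⟨Finset.insert_subset (Finset.mem_union_left _ hbS)
              hF1, ?_⟩
            rw [Finset.insert_inter_of_mem hbS, Finset.insert_inter_of_notMem hbB,
              Finset.card_insert_of_notMem (fun h => hbF (Finset.mem_inter.mp h).1),
              if_neg hFBne]
            omega
          have := hmax _ hGmem (Finset.subset_insert _ _)
          exact hbF (this ▸ Finset.mem_insert_self b F)
        · -- extend by a fresh vertex of B0
          obtain ⟨b, hbB, hbF⟩ := Finset.not_subset.mp hBF
          have hbS : b ∉ S.erase a := Finset.disjoint_right.mp hd' hbB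
          have hGmem : insert b F ∈ deltaForm k (S.erase a) B0 := by
            refine ⟨Finset.insert_subset (Finset.mem_union_right _ hbB) hF1, ?_⟩
            rw [Finset.insert_inter_of_notMem hbS, Finset.insert_inter_of_mem hbB]
            have hne2 : ¬ (insert b (F ∩ B0) = ∅) := by
              simp [Finset.insert_ne_empty]
            rw [if_neg hne2]
            have : (F ∩ S.erase a).card ≤ k - 1 := le_trans (Nat.le_add_right _ _) hF2
            omega
          have := hmax _ hGmem (Finset.subset_insert _ _)
          exact hbF (this ▸ Finset.mem_insert_self b F)

/-! ### The hypergraph side -/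

variable {t : ℕ}

/-- Which sides of `I` does `F` meet? -/
def hitParts (Vs : Fin t → Finset α) (I : Finset (Fin t)) (F : Finset α) : Finset (Fin t) :=
  I.filter (fun i => F ∩ Vs i ≠ ∅)

/-- The independence complex restricted to the sides in `I`. -/
def deltaH (Vs : Fin t → Finset α) (s : ℕ) (I : Finset (Fin t)) : Set (Finset α) :=
  {F | F ⊆ I.biUnion Vs ∧ (hitParts Vs I F).card < s}

lemma part_unique {Vs : Fin t → Finset α}
    (hdisj : ∀ i j : Fin t, i ≠ j → Disjoint (Vs i) (Vs j))
    {x : α} {i j : Fin t} (hi : x ∈ Vs i) (hj : x ∈ Vs j) : i = j := by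
  by_contra h
  exact Finset.disjoint_left.mp (hdisj i j h) hi hj

lemma indep_iff {Vs : Fin t → Finset α}
    (hdisj : ∀ i j : Fin t, i ≠ j → Disjoint (Vs i) (Vs j))
    {s : ℕ} (hs : 1 ≤ s) (F : Finset α) :
    Indep Vs s F ↔ F ∈ deltaH Vs s Finset.univ := by
  constructor
  · rintro ⟨hFV, hno⟩
    refine ⟨hFV, ?_⟩
    by_contra hcard
    push_neg at hcard
    obtain ⟨T, hTsub, hTcard⟩ := Finset.exists_subset_card_eq hcard
    have hTne : T.Nonempty := Finset.card_pos.mp (by omega)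
    obtain ⟨i0, hi0⟩ := hTne
    have hFi0 : (F ∩ Vs i0).Nonempty := by
      have := (Finset.mem_filter.mp (hTsub hi0)).2
      exact Finset.nonempty_iff_ne_empty.mpr this
    obtain ⟨x0, hx0⟩ := hFi0
    set g : Fin t → α := fun i => if h : (F ∩ Vs i).Nonempty then h.choose else x0 with hg
    have hgmem : ∀ i ∈ T, g i ∈ F ∩ Vs i := by
      intro i hi
      have hne : (F ∩ Vs i).Nonempty := Finset.nonempty_iff_ne_empty.mpr
        (Finset.mem_filter.mp (hTsub hi)).2
      simp only [hg, dif_pos hne]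
      exact hne.choose_spec
    have hinj : Set.InjOn g T := by
      intro i hi j hj hij
      have h1 := (Finset.mem_inter.mp (hgmem i hi)).2
      have h2 := (Finset.mem_inter.mp (hgmem j hj)).2
      rw [hij] at h1
      exact part_unique hdisj h2 h1 |>.symm
    set e : Finset α := T.image g with he
    have hecard : e.card = s := by
      rw [he, Finset.card_image_of_injOn hinj, hTcard]
    have heF : e ⊆ F := by
      intro x hx
      obtain ⟨i, hi, rfl⟩ := Finset.mem_image.mp hx
      exact (Finset.mem_inter.mp (hgmem i hi)).1
    refine hno e ⟨?_, hecard, ?_⟩ heF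
    · intro x hx
      obtain ⟨i, hi, rfl⟩ := Finset.mem_image.mp hx
      exact Finset.mem_biUnion.mpr ⟨i, Finset.mem_univ i, (Finset.mem_inter.mp (hgmem i hi)).2⟩
    · intro i
      rw [Finset.card_le_one]
      rintro x hx y hy
      obtain ⟨hx1, hx2⟩ := Finset.mem_inter.mp hx
      obtain ⟨hy1, hy2⟩ := Finset.mem_inter.mp hy
      obtain ⟨a, haT, rfl⟩ := Finset.mem_image.mp hx1
      obtain ⟨b, hbT, rfl⟩ := Finset.mem_image.mp hy1
      have ha' : a = i := part_unique hdisj (Finset.mem_inter.mp (hgmem a haT)).2 hx2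
      have hb' : b = i := part_unique hdisj (Finset.mem_inter.mp (hgmem b hbT)).2 hy2
      rw [ha', hb']
  · rintro ⟨hFV, hcard⟩
    refine ⟨hFV, ?_⟩
    rintro e ⟨heV, hecard, heone⟩ heF
    have hene : e.Nonempty := Finset.card_pos.mp (by omega)
    obtain ⟨x0, hx0⟩ := hene
    obtain ⟨i0, -, hi0⟩ := Finset.mem_biUnion.mp (heV hx0)
    set p : α → Fin t := fun x => if h : ∃ i, x ∈ Vs i then h.choose else i0 with hp
    have hpmem : ∀ x ∈ e, x ∈ Vs (p x) := by
      intro x hx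
      obtain ⟨i, -, hi⟩ := Finset.mem_biUnion.mp (heV hx)
      have h : ∃ i, x ∈ Vs i := ⟨i, hi⟩
      simp only [hp, dif_pos h]
      exact h.choose_spec
    have hmaps : ∀ x ∈ e, p x ∈ hitParts Vs Finset.univ F := by
      intro x hx
      refine Finset.mem_filter.mpr ⟨Finset.mem_univ _, ?_⟩
      exact Finset.nonempty_iff_ne_empty.mp ⟨x, Finset.mem_inter.mpr ⟨heF hx, hpmem x hx⟩⟩
    have hinj : Set.InjOn p e := by
      intro x hx y hy hxy
      have h1 : x ∈ e ∩ Vs (p x) := Finset.mem_inter.mpr ⟨hx, hpmem x hx⟩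
      have h2 : y ∈ e ∩ Vs (p x) := Finset.mem_inter.mpr ⟨hy, hxy ▸ hpmem y hy⟩
      exact Finset.card_le_one.mp (heone (p x)) x h1 y h2
    have := Finset.card_le_card_of_injOn p hmaps hinj
    omega


lemma not_vd (Vs : Fin t → Finset α)
    (hdisj : ∀ i j : Fin t, i ≠ j → Disjoint (Vs i) (Vs j))
    (hne : ∀ i : Fin t, (Vs i).Nonempty) :
    ∀ Δ : Set (Finset α), VertexDecomposable Δ →
      ∀ (s : ℕ) (I : Finset (Fin t)), Δ = deltaH Vs s I → 2 ≤ s → s ≤ I.card →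
      ∀ p q : Fin t, p ∈ I → q ∈ I → p ≠ q →
        2 ≤ (Vs p).card → 2 ≤ (Vs q).card → False := by
  intro Δ hΔ
  induction hΔ with
  | void =>
    intro s I heq hs hsI p q hp hq hpq hp2 hq2
    have hmem : (∅ : Finset α) ∈ deltaH Vs s I := by
      refine ⟨Finset.empty_subset _, ?_⟩
      have h0 : hitParts Vs I (∅ : Finset α) = ∅ := by
        simp [hitParts]
      rw [h0, Finset.card_empty]; omega
    rw [← heq] at hmem
    simpa using hmem
  | simplex F0 =>
    intro s I heq hs hsI p q hp hq hpq hp2 hq2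
    have hsub : I.biUnion Vs ⊆ F0 := by
      intro x hx
      obtain ⟨i, hiI, hxi⟩ := Finset.mem_biUnion.mp hx
      have hx1 : ({x} : Finset α) ∈ deltaH Vs s I := by
        refine ⟨Finset.singleton_subset_iff.mpr hx, ?_⟩
        have hss : hitParts Vs I {x} ⊆ {i} := by
          intro k hk
          obtain ⟨hkI, hkne⟩ := Finset.mem_filter.mp hk
          obtain ⟨y, hy⟩ := Finset.nonempty_iff_ne_empty.mpr hkne
          obtain ⟨hy1, hy2⟩ := Finset.mem_inter.mp hy
          have hyx : y = x := Finset.mem_singleton.mp hy1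
          subst hyx
          exact Finset.mem_singleton.mpr (part_unique hdisj hy2 hxi)
        have := Finset.card_le_card hss
        rw [Finset.card_singleton] at this
        omega
      rw [← heq] at hx1
      exact hx1 (Finset.mem_singleton_self x)
    have hVmem : I.biUnion Vs ∈ {G : Finset α | G ⊆ F0} := hsub
    rw [heq] at hVmem
    obtain ⟨-, hcard⟩ := hVmem
    have hful : hitParts Vs I (I.biUnion Vs) = I := by
      apply Finset.filter_true_of_mem
      intro i hi
      obtain ⟨w, hw⟩ := hne i
      exact Finset.nonempty_iff_ne_empty.mp
        ⟨w, Finset.mem_inter.mpr ⟨Finset.mem_biUnion.mpr ⟨i, hi, hw⟩, hw⟩⟩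
    rw [hful] at hcard
    omega
  | shed Δ' v hdel hlink hshed IHdel IHlink =>
    intro s I heq hs hsI p q hp hq hpq hp2 hq2
    subst heq
    by_cases hvV : v ∈ I.biUnion Vs
    · obtain ⟨i, hiI, hvi⟩ := Finset.mem_biUnion.mp hvV
      by_cases hi2 : 2 ≤ (Vs i).card
      · -- the shedding condition is violated at `v`
        have hcard_erase : (I.erase i).card = I.card - 1 := Finset.card_erase_of_mem hiI
        obtain ⟨J, hJsub, hJcard⟩ := Finset.exists_subset_card_eq
          (show s - 2 ≤ (I.erase i).card by omega)
        have hJI : ∀ j ∈ J, j ∈ I ∧ j ≠ i := fun j hj => by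
          have h := hJsub hj
          exact ⟨Finset.mem_of_mem_erase h, (Finset.mem_erase.mp h).1⟩
        set F : Finset α := ((Vs i).erase v) ∪ J.biUnion Vs with hF
        have hvF : v ∉ F := by
          rw [hF]
          intro h
          rcases Finset.mem_union.mp h with h | h
          · exact (Finset.mem_erase.mp h).1 rfl
          · obtain ⟨j, hjJ, hvj⟩ := Finset.mem_biUnion.mp h
            exact (hJI j hjJ).2 (part_unique hdisj hvj hvi)
        have hFsub : F ⊆ I.biUnion Vs := by
          rw [hF]
          apply Finset.union_subset
          · exact (Finset.erase_subset _ _).trans (Finset.subset_biUnion_of_mem Vs hiI)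
          · intro x hx
            obtain ⟨j, hjJ, hxj⟩ := Finset.mem_biUnion.mp hx
            exact Finset.mem_biUnion.mpr ⟨j, (hJI j hjJ).1, hxj⟩
        have hiJ : i ∉ J := fun h => (hJI i h).2 rfl
        have hcard_iJ : (insert i J).card = s - 1 := by
          rw [Finset.card_insert_of_notMem hiJ, hJcard]; omega
        have hhit : ∀ G : Finset α, G ⊆ insert v F → hitParts Vs I G ⊆ insert i J := by
          intro G hG k hk
          obtain ⟨hkI, hkne⟩ := Finset.mem_filter.mp hk
          obtain ⟨y, hy⟩ := Finset.nonempty_iff_ne_empty.mpr hkne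
          obtain ⟨hy1, hy2⟩ := Finset.mem_inter.mp hy
          have hy' := hG hy1
          rcases Finset.mem_insert.mp hy' with rfl | hy'
          · exact Finset.mem_insert.mpr (Or.inl (part_unique hdisj hy2 hvi))
          · rcases Finset.mem_union.mp hy' with h | h
            · exact Finset.mem_insert.mpr
                (Or.inl (part_unique hdisj hy2 (Finset.mem_of_mem_erase h)))
            · obtain ⟨j, hjJ, hyj⟩ := Finset.mem_biUnion.mp h
              exact Finset.mem_insert.mpr
                (Or.inr (by rw [part_unique hdisj hy2 hyj]; exact hjJ))
        have hhitcard : ∀ G : Finset α, G ⊆ insert v F → (hitParts Vs I G).card < s := by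
          intro G hG
          have := Finset.card_le_card (hhit G hG)
          rw [hcard_iJ] at this; omega
        have hFlink : F ∈ complexLink (deltaH Vs s I) v := by
          refine ⟨hvF, ?_, ?_⟩
          · exact Finset.insert_subset (Finset.mem_biUnion.mpr ⟨i, hiI, hvi⟩) hFsub
          · exact hhitcard _ (Finset.Subset.refl _)
        have hFfacet : IsFacetOf (complexDel (deltaH Vs s I) v) F := by
          refine ⟨⟨⟨hFsub, hhitcard F (Finset.subset_insert _ _)⟩, hvF⟩, ?_⟩
          rintro G ⟨⟨hGsub, hGcard⟩, hvG⟩ hFG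
          refine Finset.Subset.antisymm hFG ?_
          intro u hu
          by_contra huF
          obtain ⟨k, hkI, huk⟩ := Finset.mem_biUnion.mp (hGsub hu)
          have hki : k ≠ i := by
            rintro rfl
            have huv : u ≠ v := fun e => hvG (e ▸ hu)
            exact huF (Finset.mem_union_left _ (Finset.mem_erase.mpr ⟨huv, huk⟩))
          have hkJ : k ∉ J := by
            intro hk
            exact huF (Finset.mem_union_right _ (Finset.mem_biUnion.mpr ⟨k, hk, huk⟩))
          have hbig : insert k (insert i J) ⊆ hitParts Vs I G := by
            intro m hm
            rcases Finset.mem_insert.mp hm with rfl | hm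
            · exact Finset.mem_filter.mpr ⟨hkI, Finset.nonempty_iff_ne_empty.mp
                ⟨u, Finset.mem_inter.mpr ⟨hu, huk⟩⟩⟩
            · rcases Finset.mem_insert.mp hm with rfl | hm
              · obtain ⟨w, hw⟩ : ((Vs m).erase v).Nonempty := by
                  rw [← Finset.card_pos, Finset.card_erase_of_mem hvi]; omega
                exact Finset.mem_filter.mpr ⟨hiI, Finset.nonempty_iff_ne_empty.mp
                  ⟨w, Finset.mem_inter.mpr ⟨hFG (Finset.mem_union_left _ hw),
                    Finset.mem_of_mem_erase hw⟩⟩⟩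
              · obtain ⟨w, hw⟩ := hne m
                exact Finset.mem_filter.mpr ⟨(hJI m hm).1, Finset.nonempty_iff_ne_empty.mp
                  ⟨w, Finset.mem_inter.mpr ⟨hFG (Finset.mem_union_right _
                    (Finset.mem_biUnion.mpr ⟨m, hm, hw⟩)), hw⟩⟩⟩
          have hcard2 : (insert k (insert i J)).card = s := by
            rw [Finset.card_insert_of_notMem, hcard_iJ]
            · omega
            · intro h
              rcases Finset.mem_insert.mp h with h | h
              exacts [hki h, hkJ h]
          have := Finset.card_le_card hbig
          rw [hcard2] at this
          omega
        exact hshed F hFlink hFfacet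
      · -- `Vs i = {v}`
        have hi1 : (Vs i).card = 1 := by
          have := Finset.card_pos.mpr (hne i); omega
        have hVsi : Vs i = {v} :=
          Finset.eq_singleton_iff_unique_mem.mpr
            ⟨hvi, fun y hy => Finset.card_le_one.mp hi1.le y hy v hvi⟩
        have hFnotv : ∀ F : Finset α, F ⊆ (I.erase i).biUnion Vs → v ∉ F := by
          intro F hsub hvmem
          obtain ⟨k, hk, hvk⟩ := Finset.mem_biUnion.mp (hsub hvmem)
          exact (Finset.mem_erase.mp hk).1 (part_unique hdisj hvk hvi)
        have hcard_erase : (I.erase i).card = I.card - 1 := Finset.card_erase_of_mem hiI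
        have hpi : p ≠ i := by rintro rfl; omega
        have hqi : q ≠ i := by rintro rfl; omega
        have h3 : 3 ≤ I.card := by
          have hsub3 : ({p, q, i} : Finset (Fin t)) ⊆ I := by
            intro x hx
            rcases Finset.mem_insert.mp hx with rfl | hx
            · exact hp
            rcases Finset.mem_insert.mp hx with rfl | hx
            · exact hq
            · rw [Finset.mem_singleton.mp hx]; exact hiI
          have hc3 : ({p, q, i} : Finset (Fin t)).card = 3 := by
            rw [Finset.card_insert_of_notMem (by simp [hpq, hpi]),
              Finset.card_insert_of_notMem (by simp [hqi]), Finset.card_singleton]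
          calc 3 = ({p, q, i} : Finset (Fin t)).card := hc3.symm
            _ ≤ I.card := Finset.card_le_card hsub3
        have hdel_eq : complexDel (deltaH Vs s I) v = deltaH Vs s (I.erase i) := by
          ext F
          simp only [complexDel, Set.mem_sep_iff]
          constructor
          · rintro ⟨⟨hsub, hcard⟩, hv⟩
            refine ⟨?_, ?_⟩
            · intro x hx
              obtain ⟨k, hk, hxk⟩ := Finset.mem_biUnion.mp (hsub hx)
              have hki : k ≠ i := by
                rintro rfl
                rw [hVsi] at hxk
                exact hv (Finset.mem_singleton.mp hxk ▸ hx)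
              exact Finset.mem_biUnion.mpr ⟨k, Finset.mem_erase.mpr ⟨hki, hk⟩, hxk⟩
            · have hss : hitParts Vs (I.erase i) F ⊆ hitParts Vs I F := by
                intro k hk
                obtain ⟨hk1, hk2⟩ := Finset.mem_filter.mp hk
                exact Finset.mem_filter.mpr ⟨Finset.mem_of_mem_erase hk1, hk2⟩
              exact lt_of_le_of_lt (Finset.card_le_card hss) hcard
          · rintro ⟨hsub, hcard⟩
            have hv : v ∉ F := hFnotv F hsub
            refine ⟨⟨hsub.trans (Finset.biUnion_subset_biUnion_of_subset_left Vs
              (Finset.erase_subset i I)), ?_⟩, hv⟩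
            have heq2 : hitParts Vs I F = hitParts Vs (I.erase i) F := by
              ext k
              simp only [hitParts, Finset.mem_filter, Finset.mem_erase]
              constructor
              · rintro ⟨hk, hne'⟩
                refine ⟨⟨?_, hk⟩, hne'⟩
                rintro rfl
                rw [hVsi, Finset.inter_singleton_of_notMem hv] at hne'
                exact hne' rfl
              · rintro ⟨⟨-, hk⟩, hne'⟩
                exact ⟨hk, hne'⟩
            rwa [heq2]
        have hlink_eq : complexLink (deltaH Vs s I) v = deltaH Vs (s - 1) (I.erase i) := by
          ext F
          simp only [complexLink, Set.mem_setOf_eq]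
          constructor
          · rintro ⟨hv, hsub, hcard⟩
            have hFsub : F ⊆ (I.erase i).biUnion Vs := by
              intro x hx
              obtain ⟨k, hk, hxk⟩ := Finset.mem_biUnion.mp (hsub (Finset.mem_insert_of_mem hx))
              have hki : k ≠ i := by
                rintro rfl
                rw [hVsi] at hxk
                exact hv (Finset.mem_singleton.mp hxk ▸ hx)
              exact Finset.mem_biUnion.mpr ⟨k, Finset.mem_erase.mpr ⟨hki, hk⟩, hxk⟩
            refine ⟨hFsub, ?_⟩
            have hss : insert i (hitParts Vs (I.erase i) F) ⊆ hitParts Vs I (insert v F) := by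
              intro k hk
              rcases Finset.mem_insert.mp hk with rfl | hk
              · exact Finset.mem_filter.mpr ⟨hiI, Finset.nonempty_iff_ne_empty.mp
                  ⟨v, Finset.mem_inter.mpr ⟨Finset.mem_insert_self v F, hvi⟩⟩⟩
              · obtain ⟨hk1, hk2⟩ := Finset.mem_filter.mp hk
                obtain ⟨y, hy⟩ := Finset.nonempty_iff_ne_empty.mpr hk2
                obtain ⟨hy1, hy2⟩ := Finset.mem_inter.mp hy
                exact Finset.mem_filter.mpr ⟨Finset.mem_of_mem_erase hk1,
                  Finset.nonempty_iff_ne_empty.mp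
                    ⟨y, Finset.mem_inter.mpr ⟨Finset.mem_insert_of_mem hy1, hy2⟩⟩⟩
            have hnotin : i ∉ hitParts Vs (I.erase i) F := by
              intro h
              exact (Finset.mem_erase.mp (Finset.mem_filter.mp h).1).1 rfl
            have := Finset.card_le_card hss
            rw [Finset.card_insert_of_notMem hnotin] at this
            omega
          · rintro ⟨hsub, hcard⟩
            have hv : v ∉ F := hFnotv F hsub
            refine ⟨hv, Finset.insert_subset (Finset.mem_biUnion.mpr ⟨i, hiI, hvi⟩)
              (hsub.trans (Finset.biUnion_subset_biUnion_of_subset_left Vs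
                (Finset.erase_subset i I))), ?_⟩
            have hss : hitParts Vs I (insert v F) ⊆ insert i (hitParts Vs (I.erase i) F) := by
              intro k hk
              obtain ⟨hkI, hkne⟩ := Finset.mem_filter.mp hk
              obtain ⟨y, hy⟩ := Finset.nonempty_iff_ne_empty.mpr hkne
              obtain ⟨hy1, hy2⟩ := Finset.mem_inter.mp hy
              rcases Finset.mem_insert.mp hy1 with rfl | hy1
              · exact Finset.mem_insert.mpr (Or.inl (part_unique hdisj hy2 hvi))
              · by_cases hki : k = i
                · exact Finset.mem_insert.mpr (Or.inl hki)
                · exact Finset.mem_insert.mpr (Or.inr (Finset.mem_filter.mpr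
                    ⟨Finset.mem_erase.mpr ⟨hki, hkI⟩, Finset.nonempty_iff_ne_empty.mp
                      ⟨y, Finset.mem_inter.mpr ⟨hy1, hy2⟩⟩⟩))
            have := Finset.card_le_card hss
            have hle := Finset.card_insert_le i (hitParts Vs (I.erase i) F)
            omega
        by_cases hbig : s ≤ (I.erase i).card
        · exact IHdel s (I.erase i) hdel_eq hs hbig p q
            (Finset.mem_erase.mpr ⟨hpi, hp⟩) (Finset.mem_erase.mpr ⟨hqi, hq⟩) hpq hp2 hq2
        · exact IHlink (s - 1) (I.erase i) hlink_eq (by omega) (by omega) p q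
            (Finset.mem_erase.mpr ⟨hpi, hp⟩) (Finset.mem_erase.mpr ⟨hqi, hq⟩) hpq hp2 hq2
    · -- `v` is not a vertex at all: deletion changes nothing
      have hdeq : complexDel (deltaH Vs s I) v = deltaH Vs s I := by
        ext F
        simp only [complexDel, Set.mem_sep_iff]
        exact ⟨fun h => h.1, fun h => ⟨h, fun hvF => hvV (h.1 hvF)⟩⟩
      exact IHdel s I hdeq hs hsI p q hp hq hpq hp2 hq2

end VDaux

open VDaux

/-- The independence complex of the complete `s`-uniform `t`-partite
hypergraph is vertex decomposable if and only if at least `t - 1` of the sides are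
singletons. -/
theorem vertexDecomposable_iff_t_sub_one_singleton_sides
    {α : Type*} [DecidableEq α] {t s : ℕ} (hs : 2 ≤ s) (hst : s ≤ t)
    (Vs : Fin t → Finset α)
    (hdisj : ∀ i j : Fin t, i ≠ j → Disjoint (Vs i) (Vs j))
    (hne : ∀ i : Fin t, (Vs i).Nonempty) :
    VertexDecomposable {F : Finset α | Indep Vs s F} ↔
      ∃ j : Fin t, ∀ i : Fin t, i ≠ j → (Vs i).card = 1 := by
  constructor
  · -- vertex decomposable ⇒ at most one non-singleton side
    intro hVD
    by_contra hno
    push_neg at hno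
    obtain ⟨p, hp1, hp2⟩ := hno ⟨0, by omega⟩
    obtain ⟨q, hq1, hq2⟩ := hno p
    have hp2' : 2 ≤ (Vs p).card := by
      have := Finset.card_pos.mpr (hne p); omega
    have hq2' : 2 ≤ (Vs q).card := by
      have := Finset.card_pos.mpr (hne q); omega
    have heq : {F : Finset α | Indep Vs s F} = VDaux.deltaH Vs s Finset.univ :=
      Set.ext fun F => VDaux.indep_iff hdisj (by omega) F
    exact VDaux.not_vd Vs hdisj hne _ hVD s Finset.univ heq hs
      (by rw [Finset.card_fin]; exact hst) p q (Finset.mem_univ p) (Finset.mem_univ q)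
      hq1.symm hp2' hq2'
  · -- at most one non-singleton side ⇒ vertex decomposable
    rintro ⟨j, hj⟩
    set S : Finset α := (Finset.univ.erase j).biUnion Vs with hS
    have hdisjS : Disjoint S (Vs j) := by
      rw [Finset.disjoint_left]
      intro x hx hxj
      obtain ⟨i, hi, hxi⟩ := Finset.mem_biUnion.mp hx
      exact (Finset.mem_erase.mp hi).1 (VDaux.part_unique hdisj hxi hxj)
    have hV : Finset.univ.biUnion Vs = S ∪ Vs j := by
      ext x
      simp only [Finset.mem_biUnion, Finset.mem_union, Finset.mem_univ, true_and, hS,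
        Finset.mem_erase]
      constructor
      · rintro ⟨i, hxi⟩
        by_cases h : i = j
        · subst h; exact Or.inr hxi
        · exact Or.inl ⟨i, ⟨⟨h, trivial⟩, hxi⟩⟩
      · rintro (⟨i, hi, hxi⟩ | h)
        exacts [⟨i, hxi⟩, ⟨j, h⟩]
    have heq : {F : Finset α | Indep Vs s F} = VDaux.deltaForm (s - 1) S (Vs j) := by
      ext F
      rw [Set.mem_setOf_eq, VDaux.indep_iff hdisj (by omega) F]
      have hcount : (VDaux.hitParts Vs Finset.univ F).card
          = (F ∩ S).card + (if F ∩ Vs j = ∅ then 0 else 1) := by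
        have h1 : F ∩ S = (Finset.univ.erase j).biUnion (fun i => F ∩ Vs i) := by
          ext x
          simp only [hS, Finset.mem_inter, Finset.mem_biUnion]
          tauto
        have h2 : (F ∩ S).card = ∑ i ∈ Finset.univ.erase j, (F ∩ Vs i).card := by
          rw [h1]
          apply Finset.card_biUnion
          intro a ha b hb hab
          exact Finset.disjoint_of_subset_left Finset.inter_subset_right
            (Finset.disjoint_of_subset_right Finset.inter_subset_right (hdisj a b hab))
        have h3 : ∀ i ∈ Finset.univ.erase j,
            (F ∩ Vs i).card = if F ∩ Vs i ≠ ∅ then 1 else 0 := by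
          intro i hi
          have hle : (F ∩ Vs i).card ≤ 1 := by
            have h := Finset.card_le_card (Finset.inter_subset_right : F ∩ Vs i ⊆ Vs i)
            rw [hj i (Finset.mem_erase.mp hi).1] at h; exact h
          by_cases h : F ∩ Vs i = ∅
          · simp [h]
          · have hpos : 0 < (F ∩ Vs i).card :=
              Finset.card_pos.mpr (Finset.nonempty_iff_ne_empty.mpr h)
            rw [if_pos h]; omega
        have h4 : (F ∩ S).card = (VDaux.hitParts Vs (Finset.univ.erase j) F).card := by
          rw [h2, Finset.sum_congr rfl h3, VDaux.hitParts, Finset.card_filter]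
        have hjnot : j ∉ VDaux.hitParts Vs (Finset.univ.erase j) F := by
          intro h
          exact (Finset.mem_erase.mp (Finset.mem_filter.mp h).1).1 rfl
        have h5 : (VDaux.hitParts Vs Finset.univ F).card
            = (VDaux.hitParts Vs (Finset.univ.erase j) F).card
              + (if F ∩ Vs j = ∅ then 0 else 1) := by
          by_cases h : F ∩ Vs j = ∅
          · rw [if_pos h]
            have heq' : VDaux.hitParts Vs Finset.univ F
                = VDaux.hitParts Vs (Finset.univ.erase j) F := by
              ext k
              by_cases hkj : k = j
              · subst hkj; simp [VDaux.hitParts, h]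
              · simp [VDaux.hitParts, hkj]
            rw [heq']
            omega
          · rw [if_neg h]
            have heq' : VDaux.hitParts Vs Finset.univ F
                = insert j (VDaux.hitParts Vs (Finset.univ.erase j) F) := by
              ext k
              by_cases hkj : k = j
              · subst hkj; simp [VDaux.hitParts, h]
              · simp [VDaux.hitParts, hkj]
            rw [heq', Finset.card_insert_of_notMem hjnot]
        rw [h5, h4]
      constructor
      · rintro ⟨hsub, hcard⟩
        rw [hcount] at hcard
        exact ⟨by rw [← hV]; exact hsub, by omega⟩
      · rintro ⟨hsub, hcard⟩
        refine ⟨by rw [hV]; exact hsub, ?_⟩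
        rw [hcount]
        omega
    rw [heq]
    exact VDaux.vd_deltaForm (Vs j) (hne j) S hdisjS (s - 1)
end

section
/- Let H be the complete s-uniform t-partite hypergraph with sides V_1, …, V_t, where |V_i| = 1 for i = 1, …, t−1 and s < t, and let v be the vertex of the singleton side V_1. Then v is a shedding vertex of the independence complex Ind(H): no face of lk_{Ind(H)}{v} is a facet of Ind(H) \ v. Equivalently, no independent set F of H with v ∉ F and F ∪ {v} independent is a maximal independent set of the deletion hypergraph H \ v. -/
open Finset

/-- If `F ⊆ V` meets at least `s` sides, then `F` contains an edge. -/
lemma exists_edge_of_many_sides {α : Type*} [DecidableEq α] {t s : ℕ}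
    (Vs : Fin t → Finset α)
    (hdisj : ∀ i j : Fin t, i ≠ j → Disjoint (Vs i) (Vs j))
    {F : Finset α} (hF : F ⊆ vertexSet Vs)
    (h : s ≤ (Finset.univ.filter fun i => (F ∩ Vs i).Nonempty).card) :
    ∃ e : Finset α, IsEdge Vs s e ∧ e ⊆ F := by
  classical
  obtain ⟨T, hT, hTcard⟩ := Finset.exists_subset_card_eq h
  have hTmem : ∀ i ∈ T, (F ∩ Vs i).Nonempty := by
    intro i hi; exact (Finset.mem_filter.mp (hT hi)).2
  choose f hf using hTmem
  have hfF : ∀ i hi, f i hi ∈ F := fun i hi => (Finset.mem_inter.mp (hf i hi)).1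
  have hfV : ∀ i hi, f i hi ∈ Vs i := fun i hi => (Finset.mem_inter.mp (hf i hi)).2
  refine ⟨T.attach.image (fun i => f i.1 i.2), ⟨?_, ?_, ?_⟩, ?_⟩
  · intro x hx
    obtain ⟨i, _, rfl⟩ := Finset.mem_image.mp hx
    exact hF (hfF i.1 i.2)
  · rw [Finset.card_image_of_injOn, Finset.card_attach, hTcard]
    intro a _ b _ hab
    by_contra hne
    have : a.1 ≠ b.1 := fun h => hne (Subtype.ext h)
    have h2 : f a.1 a.2 ∈ Vs b.1 := by
      have := hfV b.1 b.2
      simp only at hab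
      rwa [← hab] at this
    exact (Finset.disjoint_left.mp (hdisj a.1 b.1 this) (hfV a.1 a.2)) h2
  · intro i
    rw [Finset.card_le_one]
    intro x hx y hy
    obtain ⟨hx1, hx2⟩ := Finset.mem_inter.mp hx
    obtain ⟨hy1, hy2⟩ := Finset.mem_inter.mp hy
    obtain ⟨a, _, rfl⟩ := Finset.mem_image.mp hx1
    obtain ⟨b, _, rfl⟩ := Finset.mem_image.mp hy1
    have ha : a.1 = i := by
      by_contra hne
      exact (Finset.disjoint_left.mp (hdisj a.1 i hne) (hfV a.1 a.2)) hx2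
    have hb : b.1 = i := by
      by_contra hne
      exact (Finset.disjoint_left.mp (hdisj b.1 i hne) (hfV b.1 b.2)) hy2
    have : a = b := Subtype.ext (ha.trans hb.symm)
    rw [this]
  · intro x hx
    obtain ⟨i, _, rfl⟩ := Finset.mem_image.mp hx
    exact hfF i.1 i.2

/-- An edge meets at least `s` sides. -/
lemma edge_meets_many_sides {α : Type*} [DecidableEq α] {t s : ℕ}
    (Vs : Fin t → Finset α)
    {e : Finset α} (he : IsEdge Vs s e) :
    s ≤ (Finset.univ.filter fun i => (e ∩ Vs i).Nonempty).card := by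
  classical
  obtain ⟨heV, hecard, hele⟩ := he
  rw [← hecard]
  have hside : ∀ x ∈ e, ∃ i : Fin t, x ∈ Vs i := by
    intro x hx
    obtain ⟨i, _, hi⟩ := Finset.mem_biUnion.mp (heV hx)
    exact ⟨i, hi⟩
  choose g hg using hside
  calc e.card = (e.attach.image (fun x => g x.1 x.2)).card := by
        rw [Finset.card_image_of_injOn, Finset.card_attach]
        intro a _ b _ hab
        have ha : a.1 ∈ e ∩ Vs (g a.1 a.2) := Finset.mem_inter.mpr ⟨a.2, hg a.1 a.2⟩
        have hb : b.1 ∈ e ∩ Vs (g a.1 a.2) := by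
          refine Finset.mem_inter.mpr ⟨b.2, ?_⟩
          have := hg b.1 b.2
          simp only at hab
          rwa [← hab] at this
        exact Subtype.ext (Finset.card_le_one.mp (hele _) a.1 ha b.1 hb)
    _ ≤ _ := by
        apply Finset.card_le_card
        intro i hi
        obtain ⟨a, _, rfl⟩ := Finset.mem_image.mp hi
        exact Finset.mem_filter.mpr ⟨Finset.mem_univ _, ⟨a.1, Finset.mem_inter.mpr ⟨a.2, hg a.1 a.2⟩⟩⟩

/-- Let `H` be the complete `s`-uniform `t`-partite hypergraph with
`s < t`, in which every side except possibly `V_j` is a singleton, and let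
`V_{i₀} = {v}` (with `i₀ ≠ j`). Then `v` is a shedding vertex of `Ind(H)`: no
independent set `F` of `H` with `v ∉ F` and `F ∪ {v}` independent is a maximal
independent set of the deletion hypergraph `H \ v`. -/
theorem shedding_vertex_of_singleton_side
    {α : Type*} [DecidableEq α] {t s : ℕ} (hs : 2 ≤ s) (hst : s < t)
    (Vs : Fin t → Finset α)
    (hdisj : ∀ i j : Fin t, i ≠ j → Disjoint (Vs i) (Vs j))
    (hne : ∀ i : Fin t, (Vs i).Nonempty)
    (j i₀ : Fin t) (hij : i₀ ≠ j)
    (hsing : ∀ i : Fin t, i ≠ j → (Vs i).card = 1)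
    (v : α) (hv : Vs i₀ = {v}) :
    ∀ F : Finset α, Indep Vs s F → v ∉ F → Indep Vs s (insert v F) →
      ¬ (F ⊆ (vertexSet Vs).erase v ∧
          (∀ e : Finset α, IsEdge Vs s e → v ∉ e → ¬ e ⊆ F) ∧
          (∀ G : Finset α, G ⊆ (vertexSet Vs).erase v →
            (∀ e : Finset α, IsEdge Vs s e → v ∉ e → ¬ e ⊆ G) → F ⊆ G → F = G)) := by
  classical
  intro F hF hvF hFv
  rintro ⟨hFsub, hFind, hFmax⟩
  -- `insert v F` meets fewer than `s` sides
  have hins : (Finset.univ.filter fun i => ((insert v F) ∩ Vs i).Nonempty).card < s := by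
    by_contra hcon
    push_neg at hcon
    obtain ⟨e, he, heF⟩ := exists_edge_of_many_sides Vs hdisj hFv.1 hcon
    exact hFv.2 e he heF
  -- `F` meets at most `s - 2` sides:  `S F ∪ {i₀} ⊆ S (insert v F)` and `i₀ ∉ S F`
  set SF := Finset.univ.filter fun i => (F ∩ Vs i).Nonempty with hSF
  have hi₀SF : i₀ ∉ SF := by
    simp only [hSF, Finset.mem_filter]
    rintro ⟨-, x, hx⟩
    obtain ⟨hx1, hx2⟩ := Finset.mem_inter.mp hx
    rw [hv, Finset.mem_singleton] at hx2
    exact hvF (hx2 ▸ hx1)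
  have hsubins : insert i₀ SF ⊆ Finset.univ.filter fun i => ((insert v F) ∩ Vs i).Nonempty := by
    intro i hi
    rcases Finset.mem_insert.mp hi with rfl | hi
    · refine Finset.mem_filter.mpr ⟨Finset.mem_univ _, ⟨v, ?_⟩⟩
      exact Finset.mem_inter.mpr ⟨Finset.mem_insert_self _ _, by rw [hv]; exact Finset.mem_singleton_self v⟩
    · obtain ⟨-, x, hx⟩ := Finset.mem_filter.mp hi
      obtain ⟨hx1, hx2⟩ := Finset.mem_inter.mp hx
      exact Finset.mem_filter.mpr ⟨Finset.mem_univ _, ⟨x,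
        Finset.mem_inter.mpr ⟨Finset.mem_insert_of_mem hx1, hx2⟩⟩⟩
  have hSFcard : SF.card + 1 < s := by
    have := Finset.card_le_card hsubins
    rw [Finset.card_insert_of_notMem hi₀SF] at this
    omega
  -- find a side `i⋆` not equal to `i₀` and not met by `F`
  have hne_univ : insert i₀ SF ≠ Finset.univ := by
    intro hcontra
    have h1 : (insert i₀ SF).card = t := by rw [hcontra, Finset.card_univ, Fintype.card_fin]
    have h2 : (insert i₀ SF).card ≤ SF.card + 1 := Finset.card_insert_le _ _
    omega
  have hex : ∃ i : Fin t, i ∉ insert i₀ SF := by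
    by_contra hc
    push_neg at hc
    exact hne_univ (Finset.eq_univ_iff_forall.mpr hc)
  obtain ⟨i', hi'⟩ := hex
  have hi'ne : i' ≠ i₀ := fun h => hi' (h ▸ Finset.mem_insert_self _ _)
  have hi'SF : i' ∉ SF := fun h => hi' (Finset.mem_insert_of_mem h)
  have hFi' : F ∩ Vs i' = ∅ := by
    by_contra hc
    exact hi'SF (Finset.mem_filter.mpr ⟨Finset.mem_univ _,
      Finset.nonempty_iff_ne_empty.mpr hc⟩)
  obtain ⟨w, hw⟩ := hne i'
  have hwv : w ≠ v := by
    intro h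
    have : v ∈ Vs i₀ := by rw [hv]; exact Finset.mem_singleton_self v
    exact (Finset.disjoint_left.mp (hdisj i' i₀ hi'ne) hw) (h ▸ this)
  have hwF : w ∉ F := by
    intro h
    have : w ∈ F ∩ Vs i' := Finset.mem_inter.mpr ⟨h, hw⟩
    rw [hFi'] at this
    exact absurd this (Finset.notMem_empty w)
  set G := insert w F with hG
  -- `G` meets at most `s - 1` sides
  have hGsides : (Finset.univ.filter fun i => (G ∩ Vs i).Nonempty).card < s := by
    have hsub : (Finset.univ.filter fun i => (G ∩ Vs i).Nonempty) ⊆ insert i' SF := by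
      intro i hi
      obtain ⟨-, x, hx⟩ := Finset.mem_filter.mp hi
      obtain ⟨hx1, hx2⟩ := Finset.mem_inter.mp hx
      rcases Finset.mem_insert.mp hx1 with rfl | hx1
      · -- x = w ∈ Vs i and w ∈ Vs i', so i = i'
        have : i = i' := by
          by_contra hne2
          exact (Finset.disjoint_left.mp (hdisj i i' hne2) hx2) hw
        exact this ▸ Finset.mem_insert_self _ _
      · exact Finset.mem_insert_of_mem (Finset.mem_filter.mpr ⟨Finset.mem_univ _,
          ⟨x, Finset.mem_inter.mpr ⟨hx1, hx2⟩⟩⟩)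
    have h1 := Finset.card_le_card hsub
    have h2 : (insert i' SF).card ≤ SF.card + 1 := Finset.card_insert_le _ _
    omega
  -- hence `G` contains no edge at all
  have hGind : ∀ e : Finset α, IsEdge Vs s e → ¬ e ⊆ G := by
    intro e he heG
    have h1 := edge_meets_many_sides Vs he
    have hsub : (Finset.univ.filter fun i => (e ∩ Vs i).Nonempty) ⊆
        (Finset.univ.filter fun i => (G ∩ Vs i).Nonempty) := by
      intro i hi
      obtain ⟨-, x, hx⟩ := Finset.mem_filter.mp hi
      obtain ⟨hx1, hx2⟩ := Finset.mem_inter.mp hx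
      exact Finset.mem_filter.mpr ⟨Finset.mem_univ _,
        ⟨x, Finset.mem_inter.mpr ⟨heG hx1, hx2⟩⟩⟩
    have := Finset.card_le_card hsub
    omega
  -- `G ⊆ V \ {v}`
  have hGsub : G ⊆ (vertexSet Vs).erase v := by
    intro x hx
    rcases Finset.mem_insert.mp hx with rfl | hx
    · exact Finset.mem_erase.mpr ⟨hwv, Finset.mem_biUnion.mpr ⟨i', Finset.mem_univ _, hw⟩⟩
    · exact hFsub hx
  have hfinal := hFmax G hGsub (fun e he _ => hGind e he) (Finset.subset_insert w F)
  have : w ∈ F := by rw [hfinal]; exact Finset.mem_insert_self w F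
  exact hwF this
end
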